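/- arXiv:1706.03435 — 4 statements merged into one kernel-verified Lean document; each statement's English description precedes it below -/
import Mathlib

section
/- Let G be a finite group, H a subgroup of G of order p^r * m with p not dividing m, and let g be an element of the normalizer of H in G whose order is a power of the prime p. Then the number of elements x in the coset H*g whose order is a power of p is divisible by p^r. -/
/-!
Fix coprime `P, Q` with `P * Q = |G|`, where `P` is the `p`-part of `|G|`. By the Chinese
remainder theorem every `x` factors uniquely as `x = u * y` with `u, y` commuting powers of `x`,
`u ^ P = 1` and `y ^ Q = 1`. For `x ∈ H g` the factor `y` lies in `H`, because `g` is a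
`p`-element normalising `H`. Hence `|H| = |H g| = ∑ T(y)`, summed over the `Q`-torsion `y` of
`H`, where `T(y)` counts the `p`-elements of `H g` that commute with `y`.

`T` is constant on `H`-conjugacy classes. If `y` commutes with all of `⟨H, g⟩`, then `T(y)` is the
number to be computed, and there are prime-to-`p` many such `y`, since they form a group of
`Q`-torsion elements. Otherwise, if `x₀` is one of the elements counted by `T(y)`, then `T(y)`
is the same count for the coset `C_H(y) x₀`, which lies in the proper subgroup
`⟨C_H(y), x₀⟩ < ⟨H, g⟩`. Induction then gives `|C_H(y)|_p ∣ T(y)`, and this times the class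
size `|H : C_H(y)|` is divisible by `|H|_p`. Reducing `|H| = ∑ T(y)` modulo `|H|_p` finishes the
proof.
-/

open Finset Subgroup MulAction

theorem MulAction.dvd_sum_of_dvd_card_orbit_mul {K α : Type*} [Group K] [MulAction K α]
    [Fintype α] {f : α → ℕ} {n : ℕ} (hf : ∀ (k : K) a, f (k • a) = f a)
    (hn : ∀ a, n ∣ (orbit K a).ncard * f a) : n ∣ ∑ a, f a := by
  classical
  rw [← (selfEquivSigmaOrbits K α).symm.sum_comp, Fintype.sum_sigma]
  refine dvd_sum fun ω _ => ?_
  have hconst (b : orbit K ω.out) : f ((selfEquivSigmaOrbits K α).symm ⟨ω, b⟩) = f ω.out := by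
    obtain ⟨b, k, rfl⟩ := b
    exact hf k _
  rw [sum_congr rfl fun b _ => hconst b, sum_const, card_univ, smul_eq_mul,
    ← Nat.card_eq_fintype_card, Nat.card_coe_set_eq]
  exact hn _

namespace Subgroup

variable {G : Type*} [Group G]

theorem card_inf_mul_relIndex (H K : Subgroup G) :
    Nat.card ↥(H ⊓ K) * K.relIndex H = Nat.card H := by
  rw [← inf_relIndex_left, ← relIndex_bot_left, ← relIndex_bot_left,
    relIndex_mul_relIndex _ _ _ bot_le inf_le_left]

theorem le_centralizer_singleton_iff {K : Subgroup G} {y : G} :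
    K ≤ centralizer {y} ↔ y ∈ centralizer (K : Set G) :=
  ⟨fun hK => mem_centralizer_iff.mpr fun _ hk => mem_centralizer_singleton_iff.mp (hK hk),
    fun hy k hk => mem_centralizer_singleton_iff.mpr (mem_centralizer_iff.mp hy k hk)⟩

theorem le_centralizer_conj_iff {K : Subgroup G} {h : G} (hh : h ∈ K) (y : G) :
    K ≤ centralizer {h * y * h⁻¹} ↔ K ≤ centralizer {y} := by
  have hconj : h ∈ centralizer {h * y * h⁻¹} ∨ h ∈ centralizer {y} → h * y * h⁻¹ = y := by
    simp only [mem_centralizer_singleton_iff]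
    rintro (hc | hc)
    · calc h * y * h⁻¹ = h⁻¹ * (h * (h * y * h⁻¹)) := by group
        _ = h⁻¹ * (h * y * h⁻¹ * h) := by rw [hc]
        _ = y := by group
    · rw [hc, mul_inv_cancel_right]
  exact ⟨fun hK => hconj (.inl (hK hh)) ▸ hK, fun hK => (hconj (.inr (hK hh))).symm ▸ hK⟩

theorem ncard_orbit_conjAct_comap (H : Subgroup G) (y : G) :
    (orbit (H.comap (ConjAct.ofConjAct : ConjAct G ≃* G).toMonoidHom) y).ncard =
      (centralizer {y}).relIndex H := by
  set K := H.comap (ConjAct.ofConjAct : ConjAct G ≃* G).toMonoidHom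
  have hstab : stabilizer K y =
      ((centralizer {y}).comap (ConjAct.ofConjAct : ConjAct G ≃* G).toMonoidHom).subgroupOf K := by
    ext k
    rw [mem_stabilizer_iff, mem_subgroupOf, mem_comap, Subgroup.smul_def, ConjAct.smul_def,
      mul_inv_eq_iff_eq_mul, mem_centralizer_singleton_iff]
    rfl
  rw [← index_stabilizer, hstab]
  change relIndex _ K = _
  rw [relIndex_comap, map_comap_eq_self_of_surjective ConjAct.ofConjAct.surjective]

theorem dvd_sum_of_conj_invariant [Fintype G] [DecidableEq G] {H : Subgroup G} {s : Finset G}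
    {f : G → ℕ} {n : ℕ} (hs : ∀ h ∈ H, ∀ y, h * y * h⁻¹ ∈ s ↔ y ∈ s)
    (hf : ∀ h ∈ H, ∀ y, f (h * y * h⁻¹) = f y)
    (hn : ∀ y ∈ s, n ∣ (centralizer {y}).relIndex H * f y) : n ∣ ∑ y ∈ s, f y := by
  rw [← univ_inter s, ← sum_ite_mem]
  refine dvd_sum_of_dvd_card_orbit_mul
    (K := H.comap (ConjAct.ofConjAct : ConjAct G ≃* G).toMonoidHom) (fun k y => ?_) fun y => ?_
  · have hk : ConjAct.ofConjAct (k : ConjAct G) ∈ H := k.2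
    simp only [Subgroup.smul_def, ConjAct.smul_def, hs _ hk, hf _ hk]
  · rw [ncard_orbit_conjAct_comap]
    split_ifs with hy
    · exact hn y hy
    · simp

end Subgroup

section CoprimeParts

variable {G : Type*} [Group G] {P Q e f : ℕ}

theorem pow_eq_self_of_modEq_one {x : G} {n m : ℕ} (hx : x ^ n = 1) (hm : m ≡ 1 [MOD n]) :
    x ^ m = x :=
  (pow_eq_pow_iff_modEq.mpr (hm.of_dvd (orderOf_dvd_of_pow_eq_one hx))).trans (pow_one x)

theorem pow_eq_one_of_modEq_zero {x : G} {n m : ℕ} (hx : x ^ n = 1) (hm : m ≡ 0 [MOD n]) :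
    x ^ m = 1 := by
  obtain ⟨k, rfl⟩ := Nat.modEq_zero_iff_dvd.mp hm
  rw [pow_mul, hx, one_pow]

theorem pow_pow_eq_one_of_modEq_zero {x : G} (hx : x ^ (P * Q) = 1) (he : e ≡ 0 [MOD Q]) :
    (x ^ e) ^ P = 1 := by
  rw [← pow_mul]
  refine pow_eq_one_of_modEq_zero hx (Nat.modEq_zero_iff_dvd.mpr ?_)
  rw [mul_comm P]
  exact mul_dvd_mul_right (Nat.modEq_zero_iff_dvd.mp he) P

theorem Commute.mul_pow_eq_left {u y : G} (h : Commute u y) (hu : u ^ P = 1) (hy : y ^ Q = 1)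
    (he : e ≡ 1 [MOD P] ∧ e ≡ 0 [MOD Q]) : (u * y) ^ e = u := by
  rw [h.mul_pow, pow_eq_self_of_modEq_one hu he.1, pow_eq_one_of_modEq_zero hy he.2, mul_one]

theorem pow_mul_pow_eq_self (hPQ : P.Coprime Q) {x : G} (hx : x ^ (P * Q) = 1)
    (he : e ≡ 1 [MOD P] ∧ e ≡ 0 [MOD Q]) (hf : f ≡ 0 [MOD P] ∧ f ≡ 1 [MOD Q]) :
    x ^ e * x ^ f = x := by
  rw [← pow_add]
  refine pow_eq_self_of_modEq_one hx ((Nat.modEq_and_modEq_iff_modEq_mul hPQ).mp ⟨?_, ?_⟩)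
  · simpa using he.1.add hf.1
  · simpa using he.2.add hf.2

end CoprimeParts

section RightCoset

variable {G : Type*} [Group G] {H : Subgroup G} {g x : G}

theorem mul_mul_inv_mem_of_mem_normalizer (hg : g ∈ normalizer (H : Set G))
    (hx : x * g⁻¹ ∈ H) {y : G} (hy : y ∈ H) : x * y * g⁻¹ ∈ H := by
  rw [show x * y * g⁻¹ = x * g⁻¹ * (g * y * g⁻¹) by group]
  exact mul_mem hx ((mem_normalizer_iff.mp hg y).mp hy)

theorem pow_mul_inv_pow_mem_of_mem_normalizer (hg : g ∈ normalizer (H : Set G))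
    (hx : x * g⁻¹ ∈ H) (n : ℕ) : x ^ n * (g ^ n)⁻¹ ∈ H := by
  induction n with
  | zero => simp
  | succ n ih =>
    rw [show x ^ (n + 1) * (g ^ (n + 1))⁻¹ = x ^ n * (g ^ n)⁻¹ * (g ^ n * (x * g⁻¹) * (g ^ n)⁻¹)
      by group]
    exact mul_mem ih ((mem_normalizer_iff.mp (pow_mem hg n) _).mp hx)

theorem conj_mul_inv_mem_iff (hg : g ∈ normalizer (H : Set G)) {h : G} (hh : h ∈ H) :
    h * x * h⁻¹ * g⁻¹ ∈ H ↔ x * g⁻¹ ∈ H := by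
  rw [show h * x * h⁻¹ * g⁻¹ = h * (x * g⁻¹) * (g * h⁻¹ * g⁻¹) by group,
    mul_mem_cancel_right ((mem_normalizer_iff.mp hg _).mp (inv_mem hh)), mul_mem_cancel_left hh]

theorem mem_normalizer_of_mul_inv_mem (hg : g ∈ normalizer (H : Set G)) (hx : x * g⁻¹ ∈ H) :
    x ∈ normalizer (H : Set G) := by
  simpa using mul_mem (le_normalizer hx) hg

theorem mem_sup_zpowers_of_mul_inv_mem (hx : x * g⁻¹ ∈ H) : x ∈ H ⊔ zpowers g := by
  simpa using mul_mem (mem_sup_left hx) (mem_sup_right (mem_zpowers g))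

end RightCoset

section CosetRoots

open scoped Classical

variable {G : Type*} [Group G] [Fintype G] {H : Subgroup G} {g : G} {P Q p : ℕ}

noncomputable def cosetRoots (H : Subgroup G) (g : G) (n : ℕ) : Finset G :=
  {x | x * g⁻¹ ∈ H ∧ x ^ n = 1}

theorem card_mul_inv_mem (H : Subgroup G) (g : G) : #{x | x * g⁻¹ ∈ H} = Nat.card H := by
  rw [Nat.card_eq_fintype_card, Fintype.card_subtype]
  exact card_equiv (Equiv.mulRight g⁻¹) fun x => by simp

theorem card_pow_eq_eq_card_commute_cosetRoots {e f : ℕ} (hPQ : P.Coprime Q)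
    (hG : ∀ x : G, x ^ (P * Q) = 1) (hg : g ∈ normalizer (H : Set G))
    (he : e ≡ 1 [MOD P] ∧ e ≡ 0 [MOD Q]) (hf : f ≡ 0 [MOD P] ∧ f ≡ 1 [MOD Q])
    {y : G} (hy : y ∈ H) (hyQ : y ^ Q = 1) :
    #{x | x * g⁻¹ ∈ H ∧ x ^ f = y} = #{x ∈ cosetRoots H g P | Commute x y} := by
  have hdecomp (x : G) : x ^ e * x ^ f = x := pow_mul_pow_eq_self hPQ (hG x) he hf
  refine card_nbij' (· ^ e) (· * y) ?_ ?_ ?_ ?_ <;> intro x hx <;>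
    simp only [cosetRoots, mem_coe, mem_filter, mem_univ, true_and] at hx ⊢
  · obtain ⟨hx, rfl⟩ := hx
    refine ⟨⟨?_, pow_pow_eq_one_of_modEq_zero (hG x) he.2⟩, Commute.pow_pow_self x e f⟩
    rw [eq_mul_inv_of_mul_eq (hdecomp x)]
    exact mul_mul_inv_mem_of_mem_normalizer hg hx (inv_mem hy)
  · obtain ⟨⟨hx, hxP⟩, hxy⟩ := hx
    refine ⟨mul_mul_inv_mem_of_mem_normalizer hg hx hy, ?_⟩
    rw [hxy.eq]
    exact hxy.symm.mul_pow_eq_left hyQ hxP ⟨hf.2, hf.1⟩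
  · rw [← hx.2, hdecomp]
  · exact hx.2.mul_pow_eq_left hx.1.2 hyQ he

theorem card_eq_sum_card_commute_cosetRoots (hPQ : P.Coprime Q) (hG : ∀ x : G, x ^ (P * Q) = 1)
    (hg : g ∈ normalizer (H : Set G)) (hgP : g ^ P = 1) :
    Nat.card H = ∑ y ∈ {y | y ∈ H ∧ y ^ Q = 1}, #{x ∈ cosetRoots H g P | Commute x y} := by
  obtain ⟨e, he⟩ := Nat.chineseRemainder hPQ 1 0
  obtain ⟨f, hf⟩ := Nat.chineseRemainder hPQ 0 1
  rw [← card_mul_inv_mem H g, card_eq_sum_card_fiberwise (f := (· ^ f))]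
  · refine sum_congr rfl fun y hy => ?_
    rw [mem_filter] at hy
    rw [filter_filter, card_pow_eq_eq_card_commute_cosetRoots hPQ hG hg he hf hy.2.1 hy.2.2]
  · intro x hx
    simp only [mem_coe, mem_filter, mem_univ, true_and] at hx ⊢
    refine ⟨?_, pow_pow_eq_one_of_modEq_zero (mul_comm P Q ▸ hG x) hf.1⟩
    simpa [pow_eq_one_of_modEq_zero hgP hf.1] using pow_mul_inv_pow_mem_of_mem_normalizer hg hx f

theorem card_commute_cosetRoots_conj (hg : g ∈ normalizer (H : Set G)) {h : G} (hh : h ∈ H)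
    (n : ℕ) (y : G) :
    #{x ∈ cosetRoots H g n | Commute x (h * y * h⁻¹)} = #{x ∈ cosetRoots H g n | Commute x y} := by
  refine (card_equiv (MulAut.conj h).toEquiv fun x => ?_).symm
  simp [cosetRoots, conj_mul_inv_mem_iff hg hh, conj_pow, Commute.conj_iff]

theorem card_commute_cosetRoots_of_le_centralizer {y : G}
    (hy : H ⊔ zpowers g ≤ centralizer {y}) (n : ℕ) :
    #{x ∈ cosetRoots H g n | Commute x y} = #(cosetRoots H g n) := by
  refine congrArg card (filter_true_of_mem fun x hx => ?_)
  simp only [cosetRoots, mem_filter, mem_univ, true_and] at hx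
  exact mem_centralizer_singleton_iff.mp (hy (mem_sup_zpowers_of_mul_inv_mem hx.1))

theorem filter_commute_cosetRoots_eq {x₀ y : G} (hx₀ : x₀ * g⁻¹ ∈ H) (hx₀y : Commute x₀ y)
    (n : ℕ) : {x ∈ cosetRoots H g n | Commute x y} = cosetRoots (H ⊓ centralizer {y}) x₀ n := by
  have hx₀C : x₀ ∈ centralizer {y} := mem_centralizer_singleton_iff.mpr hx₀y
  ext x
  have hH : x * x₀⁻¹ ∈ H ↔ x * g⁻¹ ∈ H := by
    rw [show x * x₀⁻¹ = x * g⁻¹ * (x₀ * g⁻¹)⁻¹ by group, mul_mem_cancel_right (inv_mem hx₀)]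
  have hC : x * x₀⁻¹ ∈ centralizer {y} ↔ Commute x y := by
    rw [mul_mem_cancel_right (inv_mem hx₀C), mem_centralizer_singleton_iff]
    rfl
  simp only [cosetRoots, mem_filter, mem_univ, true_and, Subgroup.mem_inf, hH, hC]
  tauto

theorem not_dvd_card_pow_eq_one {A : Subgroup G} (hA : ∀ a ∈ A, ∀ b ∈ A, Commute a b)
    (hp : p.Prime) (hQ : ¬ p ∣ Q) : ¬ p ∣ #{y | y ∈ A ∧ y ^ Q = 1} := by
  let W : Subgroup G :=
    { carrier := {y | y ∈ A ∧ y ^ Q = 1}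
      one_mem' := ⟨A.one_mem, one_pow Q⟩
      mul_mem' := fun {a b} ha hb =>
        ⟨A.mul_mem ha.1 hb.1, by rw [(hA a ha.1 b hb.1).mul_pow, ha.2, hb.2, one_mul]⟩
      inv_mem' := fun {a} ha => ⟨A.inv_mem ha.1, by rw [inv_pow, ha.2, inv_one]⟩ }
  have hW : Nat.card W = #{y | y ∈ A ∧ y ^ Q = 1} := by
    rw [← Fintype.card_subtype, ← Nat.card_eq_fintype_card]
    rfl
  intro hdvd
  have := Fact.mk hp
  obtain ⟨w, hw⟩ := exists_prime_orderOf_dvd_card' p (hW ▸ hdvd)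
  exact hQ (hw ▸ orderOf_coe w ▸ orderOf_dvd_of_pow_eq_one w.2.2)

theorem ordProj_dvd_card_commute_cosetRoots_of_not_le (hg : g ∈ normalizer (H : Set G)) {y : G}
    (hy : ¬ H ⊔ zpowers g ≤ centralizer {y})
    (ih : ∀ (H' : Subgroup G) (g' : G), H' ⊔ zpowers g' < H ⊔ zpowers g →
      g' ∈ normalizer (H' : Set G) → g' ^ P = 1 → ordProj[p] (Nat.card H') ∣ #(cosetRoots H' g' P)) :
    ordProj[p] (Nat.card ↥(H ⊓ centralizer {y})) ∣ #{x ∈ cosetRoots H g P | Commute x y} := by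
  obtain hempty | ⟨x₀, hx₀⟩ := {x ∈ cosetRoots H g P | Commute x y}.eq_empty_or_nonempty
  · simp [hempty]
  simp only [cosetRoots, mem_filter, mem_univ, true_and] at hx₀
  obtain ⟨⟨hx₀g, hx₀P⟩, hx₀y⟩ := hx₀
  have hx₀C : x₀ ∈ centralizer {y} := mem_centralizer_singleton_iff.mpr hx₀y
  rw [filter_commute_cosetRoots_eq hx₀g hx₀y]
  refine ih _ _ (lt_of_le_of_ne ?_ fun heq => hy ?_) ?_ hx₀P
  · exact sup_le (inf_le_left.trans le_sup_left)
      (zpowers_le.mpr (mem_sup_zpowers_of_mul_inv_mem hx₀g))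
  · exact heq ▸ sup_le inf_le_right (zpowers_le.mpr hx₀C)
  · exact inf_normalizer_le_normalizer_inf
      ⟨mem_normalizer_of_mul_inv_mem hg hx₀g, le_normalizer hx₀C⟩

theorem ordProj_dvd_sum_card_commute_cosetRoots (hg : g ∈ normalizer (H : Set G))
    (hT : ∀ y, ¬ H ⊔ zpowers g ≤ centralizer {y} →
      ordProj[p] (Nat.card ↥(H ⊓ centralizer {y})) ∣ #{x ∈ cosetRoots H g P | Commute x y}) :
    ordProj[p] (Nat.card H) ∣ ∑ y ∈ {y ∈ {y | y ∈ H ∧ y ^ Q = 1} |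
      ¬ H ⊔ zpowers g ≤ centralizer {y}}, #{x ∈ cosetRoots H g P | Commute x y} := by
  refine dvd_sum_of_conj_invariant (fun h hh y => ?_)
    (fun h hh y => card_commute_cosetRoots_conj hg hh P y) fun y hy => ?_
  · simp only [mem_filter, mem_univ, true_and, conj_pow, conj_eq_one_iff,
      ← mem_normalizer_iff.mp (le_normalizer hh) y]
    rw [le_centralizer_conj_iff (mem_sup_left hh)]
  · have hcard := card_inf_mul_relIndex H (centralizer {y})
    rw [← hcard, Nat.ordProj_mul p Nat.card_pos.ne'
      (right_ne_zero_of_mul (hcard ▸ Nat.card_pos.ne')), mul_comm]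
    exact mul_dvd_mul (Nat.ordProj_dvd _ _) (hT y (mem_filter.mp hy).2)

theorem ordProj_dvd_card_cosetRoots_of_forall_not_le (hPQ : P.Coprime Q)
    (hG : ∀ x : G, x ^ (P * Q) = 1) (hp : p.Prime) (hQ : ¬ p ∣ Q)
    (hg : g ∈ normalizer (H : Set G)) (hgP : g ^ P = 1)
    (hT : ∀ y, ¬ H ⊔ zpowers g ≤ centralizer {y} →
      ordProj[p] (Nat.card ↥(H ⊓ centralizer {y})) ∣ #{x ∈ cosetRoots H g P | Commute x y}) :
    ordProj[p] (Nat.card H) ∣ #(cosetRoots H g P) := by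
  let A := H ⊓ centralizer ((H ⊔ zpowers g : Subgroup G) : Set G)
  have hsum := card_eq_sum_card_commute_cosetRoots hPQ hG hg hgP
  rw [← sum_filter_add_sum_filter_not _ (fun y => H ⊔ zpowers g ≤ centralizer {y}),
    sum_congr rfl fun y hy => card_commute_cosetRoots_of_le_centralizer (mem_filter.mp hy).2 P,
    sum_const, smul_eq_mul, filter_filter] at hsum
  have hcentral : ({y | (y ∈ H ∧ y ^ Q = 1) ∧ H ⊔ zpowers g ≤ centralizer {y}} : Finset G) =
      ({y | y ∈ A ∧ y ^ Q = 1} : Finset G) := by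
    ext y
    simp only [mem_filter, mem_univ, true_and, A, Subgroup.mem_inf, le_centralizer_singleton_iff]
    tauto
  have hA : ∀ a ∈ A, ∀ b ∈ A, Commute a b := fun a ha b hb =>
    mem_centralizer_iff.mp hb.2 a (mem_sup_left ha.1)
  have hcoprime : (ordProj[p] (Nat.card H)).Coprime #{y | y ∈ A ∧ y ^ Q = 1} :=
    ((Nat.Prime.coprime_iff_not_dvd hp).mpr (not_dvd_card_pow_eq_one hA hp hQ)).pow_left _
  rw [hcentral] at hsum
  have hdvd := (Nat.ordProj_dvd (Nat.card H) p).trans (dvd_of_eq hsum)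
  exact hcoprime.dvd_of_dvd_mul_left
    ((Nat.dvd_add_left (ordProj_dvd_sum_card_commute_cosetRoots hg hT)).mp hdvd)

theorem ordProj_dvd_card_cosetRoots (hPQ : P.Coprime Q) (hG : ∀ x : G, x ^ (P * Q) = 1)
    (hp : p.Prime) (hQ : ¬ p ∣ Q) {H : Subgroup G} {g : G} (hg : g ∈ normalizer (H : Set G))
    (hgP : g ^ P = 1) : ordProj[p] (Nat.card H) ∣ #(cosetRoots H g P) := by
  suffices ∀ K : Subgroup G, ∀ H g, H ⊔ zpowers g = K → g ∈ normalizer (H : Set G) → g ^ P = 1 →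
      ordProj[p] (Nat.card H) ∣ #(cosetRoots H g P) from this _ H g rfl hg hgP
  intro K
  induction K using WellFoundedLT.induction with
  | _ K ih =>
    rintro H g rfl hg hgP
    exact ordProj_dvd_card_cosetRoots_of_forall_not_le hPQ hG hp hQ hg hgP fun y hy =>
      ordProj_dvd_card_commute_cosetRoots_of_not_le hg hy fun H' g' hlt => ih _ hlt H' g' rfl

end CosetRoots

theorem exists_orderOf_eq_pow_iff_pow_ordProj_eq_one {G : Type*} [Group G] [Finite G] {p : ℕ}
    (hp : p.Prime) {x : G} : (∃ k, orderOf x = p ^ k) ↔ x ^ ordProj[p] (Nat.card G) = 1 := by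
  rw [← orderOf_dvd_iff_pow_eq_one]
  constructor
  · rintro ⟨k, hk⟩
    rw [hk, ← hp.pow_dvd_iff_dvd_ordProj Nat.card_pos.ne', ← hk]
    exact orderOf_dvd_natCard x
  · intro h
    obtain ⟨k, -, hk⟩ := (Nat.dvd_prime_pow hp).mp h
    exact ⟨k, hk⟩

theorem card_ppower_order_in_coset_general (G : Type*) [Group G] [Fintype G]
    (p : ℕ) (hp : p.Prime) (H : Subgroup G) (r m : ℕ)
    (hcard : Nat.card H = p ^ r * m)
    (g : G) (hg : g ∈ Subgroup.normalizer (H : Set G)) (hgord : ∃ k, orderOf g = p ^ k) :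
    p ^ r ∣ Nat.card {x : G // (∃ h ∈ H, x = h * g) ∧ ∃ k, orderOf x = p ^ k} := by
  classical
  have hG : Nat.card G ≠ 0 := Nat.card_pos.ne'
  have hcount : Nat.card {x : G // (∃ h ∈ H, x = h * g) ∧ ∃ k, orderOf x = p ^ k} =
      #(cosetRoots H g (ordProj[p] (Nat.card G))) := by
    rw [Nat.card_eq_fintype_card, Fintype.card_subtype, cosetRoots]
    congr 1
    ext x
    have hcoset : (∃ h ∈ H, x = h * g) ↔ x * g⁻¹ ∈ H :=
      ⟨fun ⟨h, hh, hx⟩ => by simpa [hx] using hh, fun hx => ⟨_, hx, by group⟩⟩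
    simp only [mem_filter, mem_univ, true_and, hcoset,
      exists_orderOf_eq_pow_iff_pow_ordProj_eq_one hp]
  rw [hcount]
  refine ((hp.pow_dvd_iff_dvd_ordProj Nat.card_pos.ne').mp (hcard ▸ dvd_mul_right _ _)).trans ?_
  refine ordProj_dvd_card_cosetRoots ((Nat.coprime_ordCompl hp hG).pow_left _) (fun x => ?_) hp
    (Nat.not_dvd_ordCompl hp hG) hg ((exists_orderOf_eq_pow_iff_pow_ordProj_eq_one hp).mp hgord)
  rw [Nat.ordProj_mul_ordCompl_eq_self, pow_card_eq_one']

/-- Let `G` be a finite group, `H` a subgroup of order `p^r * m` with `p ∤ m`, and let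
`g` be an element of the normalizer of `H` whose order is a power of the prime `p`.
Then the number of elements of the coset `H * g` of `p`-power order is divisible by `p^r`. -/
theorem card_ppower_order_in_coset (G : Type*) [Group G] [Fintype G]
    (p : ℕ) (hp : p.Prime) (H : Subgroup G) (r m : ℕ)
    (hcard : Nat.card H = p ^ r * m) (hm : ¬ p ∣ m)
    (g : G) (hg : g ∈ Subgroup.normalizer (H : Set G)) (hgord : ∃ k, orderOf g = p ^ k) :
    p ^ r ∣ Nat.card {x : G // (∃ h ∈ H, x = h * g) ∧ ∃ k, orderOf x = p ^ k} :=
  card_ppower_order_in_coset_general G p hp H r m hcard g hg hgord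
end

section
/- Let S be a set of primes and Ẑ_S the inverse limit of Z/n over natural numbers n divisible by no prime in S. Every continuous surjection f : H → Ẑ_S of profinite groups admits a continuous group-homomorphism section (so H ≅ ker(f) ⋊ Ẑ_S). -/
/-- Indexing set: positive natural numbers divisible by no prime in `S`. -/
def ZHatIndex (S : Set ℕ) : Type := {n : ℕ // 0 < n ∧ ∀ p ∈ S, ¬ p ∣ n}

/-- `Ẑ_S`, the inverse limit of `ℤ/n` over positive integers `n` divisible by no prime
in `S`, realized as the subgroup of compatible elements of `∏ ℤ/n`. -/
def ZHatS (S : Set ℕ) : AddSubgroup (∀ n : ZHatIndex S, ZMod n.1) where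
  carrier := {x | ∀ (m n : ZHatIndex S) (h : m.1 ∣ n.1),
    ZMod.castHom h (ZMod m.1) (x n) = x m}
  zero_mem' := by intro m n h; simp
  add_mem' := by
    intro a b ha hb m n h
    show (ZMod.castHom h (ZMod m.1)) (a n + b n) = a m + b m
    rw [map_add, ha m n h, hb m n h]
  neg_mem' := by
    intro a ha m n h
    show (ZMod.castHom h (ZMod m.1)) (-(a n)) = -(a m)
    rw [map_neg, ha m n h]

/-!
Pick `h` with `f h = 1` and let `C` be the closure of `ℤ h`, a compact abelian group. Its image
`f C` is closed and contains the dense subgroup `ℤ · 1`, so `f C = Ẑ_S`. Let `D = ⋂ m C` over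
the positive `m` all of whose prime factors lie in `S`; such `m` act bijectively on `Ẑ_S`, so
compactness gives `f D = Ẑ_S`. Moreover `f` is injective on `D`: given `x = b y ∈ D` with
`f x = 0` and an open subgroup `U` of index `a b` (`a` prime to `S`, `b` with prime factors in
`S`), write `y ≡ k h` modulo `U ∩ ker f_a`, where `f_a` is the `ℤ/a`-coordinate of `f`; then
`b k ≡ 0 mod a` forces `a ∣ k`, hence `x ∈ U`. So `f : D → Ẑ_S` is a continuous bijective
homomorphism from a compact group onto a Hausdorff one, and its inverse is the section.
-/
section SNumbers

variable {S : Set ℕ}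

def IsSNumber (S : Set ℕ) (m : ℕ) : Prop := 0 < m ∧ ∀ p : ℕ, p.Prime → p ∣ m → p ∈ S

def IsSFree (S : Set ℕ) (n : ℕ) : Prop := ∀ p ∈ S, ¬ p ∣ n

lemma isSNumber_one : IsSNumber S 1 :=
  ⟨one_pos, fun _ hp hdvd => absurd (Nat.eq_one_of_dvd_one hdvd) hp.ne_one⟩

lemma IsSNumber.mul {a b : ℕ} (ha : IsSNumber S a) (hb : IsSNumber S b) : IsSNumber S (a * b) :=
  ⟨Nat.mul_pos ha.1 hb.1, fun p hp hdvd => (hp.dvd_mul.1 hdvd).elim (ha.2 p hp) (hb.2 p hp)⟩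

lemma IsSFree.coprime {a b : ℕ} (ha : IsSFree S a) (hb : IsSNumber S b) : a.Coprime b :=
  Nat.coprime_of_dvd fun p hp hpa hpb => ha p (hb.2 p hp hpb) hpa

variable (hS : ∀ p ∈ S, p.Prime)
include hS

lemma isSFree_one : IsSFree S 1 :=
  fun p hp hdvd => (hS p hp).ne_one (Nat.eq_one_of_dvd_one hdvd)

lemma IsSFree.mul {a b : ℕ} (ha : IsSFree S a) (hb : IsSFree S b) : IsSFree S (a * b) :=
  fun p hp hdvd => ((hS p hp).dvd_mul.1 hdvd).elim (ha p hp) (hb p hp)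

lemma exists_isSFree_mul_isSNumber {N : ℕ} (hN : 0 < N) :
    ∃ a b, IsSFree S a ∧ IsSNumber S b ∧ a * b = N := by
  induction N using Nat.recOnMul with
  | zero => exact absurd hN (lt_irrefl 0)
  | one => exact ⟨1, 1, isSFree_one hS, isSNumber_one, rfl⟩
  | prime p hp =>
    by_cases hpS : p ∈ S
    · refine ⟨1, p, isSFree_one hS, ⟨hp.pos, fun q hq hqp => ?_⟩, one_mul p⟩
      rwa [(Nat.prime_dvd_prime_iff_eq hq hp).1 hqp]
    · refine ⟨p, 1, fun q hq hqp => hpS ?_, isSNumber_one, mul_one p⟩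
      rwa [← (Nat.prime_dvd_prime_iff_eq (hS q hq) hp).1 hqp]
  | mul m n ihm ihn =>
    obtain ⟨a, b, ha, hb, rfl⟩ := ihm (Nat.pos_of_mul_pos_right hN)
    obtain ⟨c, d, hc, hd, rfl⟩ := ihn (Nat.pos_of_mul_pos_left hN)
    exact ⟨a * c, b * d, ha.mul hS hc, hb.mul hd, by ring⟩

end SNumbers

namespace ZHatS

variable {S : Set ℕ}

def one (S : Set ℕ) : ZHatS S :=
  ⟨fun _ => 1, fun m _ h => map_one (ZMod.castHom h (ZMod m.1))⟩

lemma zsmul_one_apply (k : ℤ) (n : ZHatIndex S) : (k • one S).1 n = k := by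
  change k • (1 : ZMod n.1) = k
  rw [zsmul_eq_mul, mul_one]

lemma exists_nsmul_eq {m : ℕ} (hm : IsSNumber S m) (z : ZHatS S) : ∃ w : ZHatS S, m • w = z := by
  have hunit (n : ZHatIndex S) : IsUnit (m : ZMod n.1) :=
    (ZMod.isUnit_iff_coprime m n.1).2 (IsSFree.coprime n.2.2 hm).symm
  let u (n : ZHatIndex S) : (ZMod n.1)ˣ := (hunit n).unit
  have hinv (a b : ZHatIndex S) (h : a.1 ∣ b.1) :
      ZMod.castHom h (ZMod a.1) ↑(u b)⁻¹ = ↑(u a)⁻¹ := by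
    refine Units.eq_inv_of_mul_eq_one_left ?_
    rw [IsUnit.unit_spec, ← map_natCast (ZMod.castHom h (ZMod a.1)) m, ← map_mul,
      ← IsUnit.unit_spec (hunit b), Units.mul_inv, map_one]
  refine ⟨⟨fun n => ↑(u n)⁻¹ * z.1 n, fun a b h => ?_⟩, Subtype.ext (funext fun n => ?_)⟩
  · rw [map_mul, hinv a b h, z.2 a b h]
  · change m • (↑(u n)⁻¹ * z.1 n) = z.1 n
    rw [nsmul_eq_mul, ← mul_assoc, ← IsUnit.unit_spec (hunit n), Units.mul_inv, one_mul]

variable (hS : ∀ p ∈ S, p.Prime)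
include hS

lemma exists_zsmul_one_eqOn (z : ZHatS S) (I : Finset (ZHatIndex S)) :
    ∃ k : ℤ, ∀ i ∈ I, (k • one S).1 i = z.1 i := by
  have hL : IsSFree S (∏ i ∈ I, i.1) :=
    Finset.prod_induction _ _ (fun _ _ => IsSFree.mul hS) (isSFree_one hS) fun i _ => i.2.2
  let L : ZHatIndex S := ⟨∏ i ∈ I, i.1, Finset.prod_pos fun i _ => i.2.1, hL⟩
  have : NeZero L.1 := ⟨L.2.1.ne'⟩
  refine ⟨(z.1 L).val, fun i hi => ?_⟩
  rw [zsmul_one_apply, ← z.2 i L (Finset.dvd_prod_of_mem _ hi), ZMod.castHom_apply,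
    ZMod.cast_eq_val, Int.cast_natCast]

lemma dense_zmultiples_one :
    Dense (AddSubgroup.zmultiples (one S) : Set (ZHatS S)) := by
  refine fun z => mem_closure_iff.2 fun o ho hzo => ?_
  obtain ⟨t, ht, rfl⟩ := isOpen_induced_iff.1 ho
  obtain ⟨I, u, hu, hIu⟩ := isOpen_pi_iff.1 ht z.1 hzo
  obtain ⟨k, hk⟩ := exists_zsmul_one_eqOn hS z I
  refine ⟨k • one S, hIu fun i hi => ?_, k, rfl⟩
  rw [Finset.mem_coe] at hi
  rw [hk i hi]
  exact (hu i hi).2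

lemma surjective_of_map_eq_one {G : Type*} [AddGroup G] [TopologicalSpace G] [CompactSpace G]
    {φ : G →+ ZHatS S} (hφ : Continuous φ) {h : G} (hh : φ h = one S) :
    Function.Surjective φ := by
  have hsub : closure (AddSubgroup.zmultiples (one S) : Set (ZHatS S)) ⊆ Set.range φ := by
    refine (isCompact_range hφ).isClosed.closure_subset_iff.2 ?_
    rintro _ ⟨k, rfl⟩
    exact ⟨k • h, by simp [hh]⟩
  exact fun z => hsub (dense_zmultiples_one hS z)

end ZHatS

lemma exists_sub_zsmul_mem_of_dense_zmultiples {G : Type*} [AddGroup G] [TopologicalSpace G]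
    [IsTopologicalAddGroup G] {h : G} (hdense : Dense (AddSubgroup.zmultiples h : Set G))
    {U : AddSubgroup G} (hU : IsOpen (U : Set G)) (y : G) : ∃ k : ℤ, y - k • h ∈ U := by
  obtain ⟨_, ⟨k, rfl⟩, hk⟩ :=
    hdense.exists_mem_open (hU.preimage (continuous_sub_left y)) ⟨y, by simp⟩
  exact ⟨k, hk⟩

def sDivisiblePart (S : Set ℕ) (G : Type*) [AddCommGroup G] : AddSubgroup G :=
  ⨅ m : {m : ℕ // IsSNumber S m}, (nsmulAddMonoidHom m.1).range

lemma mem_sDivisiblePart {S : Set ℕ} {G : Type*} [AddCommGroup G] {x : G} :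
    x ∈ sDivisiblePart S G ↔ ∀ m, IsSNumber S m → ∃ y : G, m • y = x := by
  simp [sDivisiblePart]

section SDivisiblePart

variable {S : Set ℕ} {G : Type*} [AddCommGroup G] [TopologicalSpace G] [IsTopologicalAddGroup G]
  [CompactSpace G]

lemma isClosed_sDivisiblePart [T2Space G] : IsClosed (sDivisiblePart S G : Set G) := by
  rw [sDivisiblePart, AddSubgroup.coe_iInf]
  exact isClosed_iInter fun m => (isCompact_range (continuous_nsmul m.1)).isClosed

lemma exists_mem_sDivisiblePart_map_eq [T2Space G] {φ : G →+ ZHatS S} (hφ : Continuous φ)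
    (hsurj : Function.Surjective φ) (z : ZHatS S) :
    ∃ x ∈ sDivisiblePart S G, φ x = z := by
  let Y (m : {m : ℕ // IsSNumber S m}) : Set G := Set.range (m.1 • · : G → G) ∩ φ ⁻¹' {z}
  have hY_closed m : IsClosed (Y m) :=
    (isCompact_range (continuous_nsmul m.1)).isClosed.inter (isClosed_singleton.preimage hφ)
  have hY_nonempty m : (Y m).Nonempty := by
    obtain ⟨w, hw⟩ := ZHatS.exists_nsmul_eq m.2 z
    obtain ⟨y, rfl⟩ := hsurj w
    exact ⟨m.1 • y, ⟨y, rfl⟩, by simp [hw]⟩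
  have hY_directed : Directed (· ⊇ ·) Y := by
    intro a b
    refine ⟨⟨a.1 * b.1, a.2.mul b.2⟩, ?_, ?_⟩
    · rintro _ ⟨⟨y, rfl⟩, hz⟩
      exact ⟨⟨b.1 • y, (mul_nsmul' y a.1 b.1).symm⟩, hz⟩
    · rintro _ ⟨⟨y, rfl⟩, hz⟩
      exact ⟨⟨a.1 • y, (mul_nsmul y a.1 b.1).symm⟩, hz⟩
  have : Nonempty {m : ℕ // IsSNumber S m} := ⟨⟨1, isSNumber_one⟩⟩
  obtain ⟨x, hx⟩ := IsCompact.nonempty_iInter_of_directed_nonempty_isCompact_isClosed Y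
    hY_directed hY_nonempty (fun m => (hY_closed m).isCompact) hY_closed
  rw [Set.mem_iInter] at hx
  exact ⟨x, mem_sDivisiblePart.2 fun m hm => (hx ⟨m, hm⟩).1, (hx ⟨1, isSNumber_one⟩).2⟩

variable (hS : ∀ p ∈ S, p.Prime)
  {φ : G →+ ZHatS S} (hφ : Continuous φ) {h : G} (hh : φ h = ZHatS.one S)
  (hdense : Dense (AddSubgroup.zmultiples h : Set G))
include hS hφ hh hdense

lemma mem_of_mem_sDivisiblePart_of_map_eq_zero {x : G} (hx : x ∈ sDivisiblePart S G)
    (hx0 : φ x = 0) {U : AddSubgroup G} (hU : IsOpen (U : Set G)) : x ∈ U := by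
  have : Finite (G ⧸ U) := U.quotient_finite_of_isOpen hU
  have : U.FiniteIndex := U.finiteIndex_of_finite_quotient
  have hindex : 0 < U.index := Nat.pos_of_ne_zero U.index_ne_zero_of_finite
  obtain ⟨a, b, ha, hb, hab⟩ := exists_isSFree_mul_isSNumber hS hindex
  let i : ZHatIndex S := ⟨a, Nat.pos_of_mul_pos_right (hab ▸ hindex), ha⟩
  let φa : G →+ ZMod a :=
    (Pi.evalAddMonoidHom (fun n : ZHatIndex S => ZMod n.1) i).comp ((ZHatS S).subtype.comp φ)
  have hφa : Continuous φa := (continuous_apply i).comp (continuous_subtype_val.comp hφ)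
  have hU' : IsOpen ((U ⊓ φa.ker : AddSubgroup G) : Set G) :=
    hU.inter ((isOpen_discrete {0}).preimage hφa)
  obtain ⟨y, rfl⟩ := mem_sDivisiblePart.1 hx b hb
  obtain ⟨k, hk⟩ := exists_sub_zsmul_mem_of_dense_zmultiples hdense hU' y
  have hφa_h : φa h = 1 := by
    change (φ h).1 i = 1
    rw [hh]
    rfl
  have hφa_y : φa y = k := by
    have : φa (y - k • h) = 0 := hk.2
    rwa [map_sub, map_zsmul, hφa_h, sub_eq_zero, zsmul_one] at this
  have hak : (a : ℤ) ∣ k := by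
    have : φa (b • y) = 0 := by simp [φa, hx0]
    rw [map_nsmul, hφa_y, nsmul_eq_mul, ← Int.cast_natCast, ← Int.cast_mul,
      ZMod.intCast_zmod_eq_zero_iff_dvd] at this
    exact (Nat.isCoprime_iff_coprime.2 (ha.coprime hb)).dvd_of_dvd_mul_left this
  obtain ⟨c, rfl⟩ := hak
  have hsplit : b • y = b • (y - (a * c) • h) + c • (U.index • h) := by
    rw [← hab]
    module
  rw [hsplit]
  exact U.add_mem (U.nsmul_mem hk.1 b) (U.zsmul_mem (U.nsmul_index_mem h) c)

lemma eq_zero_of_mem_sDivisiblePart_of_map_eq_zero [TotallyDisconnectedSpace G] {x : G}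
    (hx : x ∈ sDivisiblePart S G) (hx0 : φ x = 0) : x = 0 := by
  by_contra hne
  obtain ⟨U, hU⟩ := ProfiniteGrp.exist_openNormalAddSubgroup_sub_open_nhds_of_zero
    isOpen_compl_singleton (Ne.symm hne)
  exact hU (mem_of_mem_sDivisiblePart_of_map_eq_zero hS hφ hh hdense hx hx0 U.isOpen) rfl

theorem exists_continuous_section_of_dense_zmultiples [T2Space G] [TotallyDisconnectedSpace G] :
    ∃ s : ZHatS S →+ G, Continuous s ∧ ∀ z, φ (s z) = z := by
  let D := sDivisiblePart S G
  have : CompactSpace D := isCompact_iff_compactSpace.1 isClosed_sDivisiblePart.isCompact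
  let ψ : D →+ ZHatS S := φ.comp D.subtype
  have hψ : Function.Bijective ψ := by
    refine ⟨(injective_iff_map_eq_zero ψ).2 fun x hx =>
      Subtype.ext (eq_zero_of_mem_sDivisiblePart_of_map_eq_zero hS hφ hh hdense x.2 hx),
      fun z => ?_⟩
    obtain ⟨x, hxD, rfl⟩ := exists_mem_sDivisiblePart_map_eq hφ
      (ZHatS.surjective_of_map_eq_one hS hφ hh) z
    exact ⟨⟨x, hxD⟩, rfl⟩
  let e := AddEquiv.ofBijective ψ hψ
  refine ⟨D.subtype.comp e.symm.toAddMonoidHom, continuous_subtype_val.comp ?_,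
    e.apply_symm_apply⟩
  exact Continuous.continuous_symm_of_equiv_compact_to_t2 (f := e.toEquiv)
    (hφ.comp continuous_subtype_val)

end SDivisiblePart

/-- Every continuous surjection from a profinite group onto `Ẑ_S` admits a continuous
homomorphic section. -/
theorem continuous_section_of_surjection_onto_ZHatS
    (S : Set ℕ) (hS : ∀ p ∈ S, p.Prime)
    (H : Type*) [AddGroup H] [TopologicalSpace H] [IsTopologicalAddGroup H]
    [CompactSpace H] [T2Space H] [TotallyDisconnectedSpace H] :
    letI : ∀ n : ZHatIndex S, TopologicalSpace (ZMod n.1) := fun _ => ⊥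
    ∀ f : H →+ ZHatS S, Continuous f → Function.Surjective f →
      ∃ s : ZHatS S →+ H, Continuous s ∧ ∀ z, f (s z) = z := by
  intro f hf hsurj
  obtain ⟨h, hh⟩ := hsurj (ZHatS.one S)
  let Z := AddSubgroup.zmultiples h
  let C := Z.topologicalClosure
  let _ : AddCommGroup C := Z.addCommGroupTopologicalClosure fun x y => Std.Commutative.comm x y
  have : CompactSpace C := isCompact_iff_compactSpace.1 Z.isClosed_topologicalClosure.isCompact
  let hC : C := ⟨h, Z.le_topologicalClosure (AddSubgroup.mem_zmultiples h)⟩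
  have hdense : Dense (AddSubgroup.zmultiples hC : Set C) := by
    rw [Topology.IsInducing.subtypeVal.dense_iff]
    intro x
    rw [← AddSubgroup.coe_subtype, ← AddSubgroup.coe_map, AddMonoidHom.map_zmultiples]
    exact x.2
  -- The topology `⊥` on `ZMod n` fixed by the statement is Mathlib's instance, definitionally.
  obtain ⟨s, hs, hfs⟩ := exists_continuous_section_of_dense_zmultiples (φ := f.comp C.subtype)
    hS (hf.comp continuous_subtype_val) hh hdense
  exact ⟨C.subtype.comp s, continuous_subtype_val.comp hs, hfs⟩
end

section
/- Let p be a prime and f : H → Z_p a continuous surjection of profinite groups, where Z_p is the additive group of p-adic integers. Then f admits a continuous homomorphic section. -/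
/-!
Choose `h` with `f h = 1`. Modulo an open normal subgroup `U`, `h` has finite order `p ^ e * m`
with `p ∤ m`, and `c • h` with `c ≡ 1 [p ^ e]`, `c ≡ 0 [m]` is its `p`-primary part. These cosets
are compatible as `U` shrinks, so by compactness some `x` lies in all of them; then `f x = 1` and
`p ^ n • x → 0`. The closure of `ℤ • (1, x)` in `ℤ_[p] × H` is therefore the graph of a continuous
homomorphism `s` with `s 1 = x`, and `f ∘ s = id` since both are continuous and agree at `1`.
-/

open Filter Topology

/-- Multiplication by `c` is the projection of `ℤ ⧸ N` onto its `p`-primary component. -/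
def IsPPrimaryIdempotent (p N : ℕ) (c : ℤ) : Prop :=
  (p : ℤ) ^ N.factorization p ∣ c - 1 ∧ (ordCompl[p] N : ℤ) ∣ c

section PPrimaryIdempotent

variable {p N : ℕ} {c c' : ℤ}

theorem isCoprime_pow_factorization_ordCompl (hp : p.Prime) (hN : N ≠ 0) :
    IsCoprime ((p : ℤ) ^ N.factorization p) (ordCompl[p] N : ℤ) := by
  exact_mod_cast Nat.isCoprime_iff_coprime.mpr ((Nat.coprime_ordCompl hp hN).pow_left _)

theorem natCast_eq_pow_factorization_mul_ordCompl (p N : ℕ) :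
    (N : ℤ) = (p : ℤ) ^ N.factorization p * (ordCompl[p] N : ℤ) := by
  exact_mod_cast (Nat.ordProj_mul_ordCompl_eq_self N p).symm

theorem exists_isPPrimaryIdempotent (hp : p.Prime) (hN : N ≠ 0) :
    ∃ c, IsPPrimaryIdempotent p N c := by
  obtain ⟨u, v, huv⟩ := isCoprime_pow_factorization_ordCompl hp hN
  exact ⟨v * (ordCompl[p] N : ℤ), ⟨-u, by linear_combination huv⟩, dvd_mul_left _ _⟩

namespace IsPPrimaryIdempotent

theorem of_dvd {N' : ℕ} (hN' : N' ≠ 0) (hdvd : N ∣ N') (hc : IsPPrimaryIdempotent p N' c) :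
    IsPPrimaryIdempotent p N c := by
  refine ⟨?_, (Int.natCast_dvd_natCast.mpr (Nat.ordCompl_dvd_ordCompl_of_dvd hdvd p)).trans
    hc.2⟩
  have hpow : (p : ℤ) ^ N.factorization p ∣ (p : ℤ) ^ N'.factorization p := by
    exact_mod_cast Nat.ordProj_dvd_ordProj_of_dvd hN' hdvd p
  exact hpow.trans hc.1

theorem dvd_sub (hp : p.Prime) (hN : N ≠ 0) (hc : IsPPrimaryIdempotent p N c)
    (hc' : IsPPrimaryIdempotent p N c') : (N : ℤ) ∣ c - c' := by
  rw [natCast_eq_pow_factorization_mul_ordCompl p N]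
  refine (isCoprime_pow_factorization_ordCompl hp hN).mul_dvd ?_ (_root_.dvd_sub hc.2 hc'.2)
  simpa using _root_.dvd_sub hc.1 hc'.1

theorem dvd_pow_mul (hc : IsPPrimaryIdempotent p N c) :
    (N : ℤ) ∣ p ^ N.factorization p * c := by
  rw [natCast_eq_pow_factorization_mul_ordCompl p N]
  exact mul_dvd_mul_left _ hc.2

theorem pow_dvd_sub_one {k : ℕ} (hp : p.Prime) (hN : N ≠ 0) (hk : p ^ k ∣ N)
    (hc : IsPPrimaryIdempotent p N c) : (p : ℤ) ^ k ∣ c - 1 :=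
  (pow_dvd_pow _ ((hp.pow_dvd_iff_le_factorization hN).mp hk)).trans hc.1

variable {G : Type*} [AddGroup G] {a : G}

theorem zsmul_eq (hp : p.Prime) (ha : addOrderOf a ≠ 0)
    (hc : IsPPrimaryIdempotent p (addOrderOf a) c)
    (hc' : IsPPrimaryIdempotent p (addOrderOf a) c') :
    c • a = c' • a :=
  addOrderOf_dvd_sub_iff_zsmul_eq_zsmul.mp (hc.dvd_sub hp ha hc')

theorem pow_mul_zsmul_eq_zero (hc : IsPPrimaryIdempotent p (addOrderOf a) c) :
    ((p : ℤ) ^ (addOrderOf a).factorization p * c) • a = 0 :=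
  addOrderOf_dvd_iff_zsmul_eq_zero.mp hc.dvd_pow_mul

end IsPPrimaryIdempotent

end PPrimaryIdempotent

namespace PadicInt

variable {p : ℕ} [hp : Fact p.Prime]

theorem setOf_pow_dvd_eq_closedBall (k : ℕ) :
    {z : ℤ_[p] | (p : ℤ_[p]) ^ k ∣ z} = Metric.closedBall 0 ((p : ℝ) ^ (-k : ℤ)) := by
  ext z
  rw [Set.mem_ofPred_eq, mem_closedBall_zero_iff, norm_le_pow_iff_mem_span_pow,
    Ideal.mem_span_singleton]

theorem isOpen_setOf_pow_dvd (k : ℕ) : IsOpen {z : ℤ_[p] | (p : ℤ_[p]) ^ k ∣ z} := by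
  rw [setOf_pow_dvd_eq_closedBall]
  exact IsUltrametricDist.isOpen_closedBall _ (zpow_ne_zero _ (Nat.cast_ne_zero.mpr hp.out.ne_zero))

theorem eq_zero_of_forall_pow_dvd {z : ℤ_[p]} (h : ∀ k : ℕ, (p : ℤ_[p]) ^ k ∣ z) :
    z = 0 := by
  by_contra hz
  have := (mem_span_pow_iff_le_valuation z hz (z.valuation + 1)).mp
    (Ideal.mem_span_singleton.mpr (h _))
  omega

theorem continuous_addMonoidHom_ext {G : Type*} [AddGroup G] [TopologicalSpace G] [T2Space G]
    {φ ψ : ℤ_[p] →+ G} (hφ : Continuous φ) (hψ : Continuous ψ) (h1 : φ 1 = ψ 1) :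
    φ = ψ :=
  DFunLike.coe_injective <| denseRange_intCast.equalizer hφ hψ <| funext fun n => by
    simp only [Function.comp_apply, ← zsmul_one, map_zsmul, h1]

end PadicInt

namespace OpenNormalAddSubgroup

variable {G : Type*} [AddGroup G] [TopologicalSpace G]

instance : Nonempty (OpenNormalAddSubgroup G) :=
  ⟨{ toOpenAddSubgroup := ⊤, isNormal' := AddSubgroup.normal_top }⟩

theorem addOrderOf_mk_dvd_of_le {U V : OpenNormalAddSubgroup G} (hVU : V ≤ U) (h : G) :
    addOrderOf (h : G ⧸ U.toAddSubgroup) ∣ addOrderOf (h : G ⧸ V.toAddSubgroup) :=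
  addOrderOf_map_dvd (QuotientAddGroup.map _ _ (AddMonoidHom.id G) hVU) (h : G ⧸ V.toAddSubgroup)

theorem mk_eq_zero_iff {U : OpenNormalAddSubgroup G} {g : G} :
    (g : G ⧸ U.toAddSubgroup) = 0 ↔ g ∈ U :=
  QuotientAddGroup.eq_zero_iff g

theorem mk_eq_mk_of_le {U V : OpenNormalAddSubgroup G} (hVU : V ≤ U) {g g' : G}
    (hg : (g : G ⧸ V.toAddSubgroup) = g') : (g : G ⧸ U.toAddSubgroup) = g' :=
  QuotientAddGroup.eq.mpr (hVU (QuotientAddGroup.eq.mp hg))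

variable [IsTopologicalAddGroup G] [CompactSpace G]

theorem addOrderOf_mk_ne_zero (U : OpenNormalAddSubgroup G) (h : G) :
    addOrderOf (h : G ⧸ U.toAddSubgroup) ≠ 0 := by
  have := AddSubgroup.quotient_finite_of_isOpen U.toAddSubgroup U.isOpen
  exact (isOfFinAddOrder_of_finite _).addOrderOf_pos.ne'

end OpenNormalAddSubgroup

section OpenNormalAddSubgroup

variable {G : Type*} [AddGroup G] [TopologicalSpace G] [IsTopologicalAddGroup G] [CompactSpace G]
  [TotallyDisconnectedSpace G]

theorem hasBasis_nhds_zero_openNormalAddSubgroup :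
    (𝓝 (0 : G)).HasBasis (fun _ : OpenNormalAddSubgroup G => True) (fun U => (U : Set G)) := by
  refine ⟨fun V => ⟨fun hV => ?_, fun ⟨U, _, hUV⟩ => ?_⟩⟩
  · obtain ⟨W, hWV, hW, h0W⟩ := mem_nhds_iff.mp hV
    obtain ⟨U, hUW⟩ := ProfiniteGrp.exist_openNormalAddSubgroup_sub_open_nhds_of_zero hW h0W
    exact ⟨U, trivial, hUW.trans hWV⟩
  · exact mem_of_superset (U.isOpen.mem_nhds U.zero_mem) hUV

theorem eq_zero_of_forall_mem_openNormalAddSubgroup {g : G}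
    (hg : ∀ U : OpenNormalAddSubgroup G, g ∈ U) : g = 0 := by
  by_contra hne
  obtain ⟨U, -, hU⟩ := hasBasis_nhds_zero_openNormalAddSubgroup.mem_iff.mp
    (isOpen_compl_singleton.mem_nhds (Ne.symm hne))
  exact hU (hg U) rfl

end OpenNormalAddSubgroup

/-- `x` is the `p`-primary component of `h` in the procyclic group generated by `h`. -/
def IsPPrimaryComponent {G : Type*} [AddGroup G] [TopologicalSpace G] (p : ℕ) (h x : G) : Prop :=
  ∀ (U : OpenNormalAddSubgroup G) (c : ℤ),
    IsPPrimaryIdempotent p (addOrderOf (h : G ⧸ U.toAddSubgroup)) c →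
      (x : G ⧸ U.toAddSubgroup) = c • (h : G ⧸ U.toAddSubgroup)

section PPrimaryComponent

variable {p : ℕ} {G : Type*} [AddGroup G] [TopologicalSpace G] [IsTopologicalAddGroup G]
  [CompactSpace G]

theorem exists_isPPrimaryComponent (hp : p.Prime) (h : G) : ∃ x, IsPPrimaryComponent p h x := by
  choose c hc using fun U : OpenNormalAddSubgroup G =>
    exists_isPPrimaryIdempotent hp (U.addOrderOf_mk_ne_zero h)
  let C (U : OpenNormalAddSubgroup G) : Set G :=
    {g | (g : G ⧸ U.toAddSubgroup) = c U • (h : G ⧸ U.toAddSubgroup)}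
  have hanti {U V : OpenNormalAddSubgroup G} (hVU : V ≤ U) : C V ⊆ C U := by
    intro g hg
    have hgU : (g : G ⧸ U.toAddSubgroup) = ((c V • h : G) : G ⧸ U.toAddSubgroup) :=
      OpenNormalAddSubgroup.mk_eq_mk_of_le hVU (hg.trans (QuotientAddGroup.mk_zsmul _ _ _).symm)
    have hcV : IsPPrimaryIdempotent p (addOrderOf (h : G ⧸ U.toAddSubgroup)) (c V) :=
      (hc V).of_dvd (V.addOrderOf_mk_ne_zero h)
        (OpenNormalAddSubgroup.addOrderOf_mk_dvd_of_le hVU h)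
    rw [Set.mem_ofPred_eq, hgU, QuotientAddGroup.mk_zsmul,
      hcV.zsmul_eq hp (U.addOrderOf_mk_ne_zero h) (hc U)]
  have hclosed (U : OpenNormalAddSubgroup G) : IsClosed (C U) := by
    have := QuotientAddGroup.discreteTopology (N := U.toAddSubgroup) U.isOpen
    exact (isClosed_discrete {c U • (h : G ⧸ U.toAddSubgroup)}).preimage
      QuotientAddGroup.continuous_mk
  obtain ⟨x, hx⟩ := IsCompact.nonempty_iInter_of_directed_nonempty_isCompact_isClosed C
    (fun U V => ⟨U ⊓ V, hanti inf_le_left, hanti inf_le_right⟩)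
    (fun U => ⟨c U • h, QuotientAddGroup.mk_zsmul _ _ _⟩) (fun U => (hclosed U).isCompact)
    hclosed
  refine ⟨x, fun U c' hc' => ?_⟩
  rw [hc'.zsmul_eq hp (U.addOrderOf_mk_ne_zero h) (hc U)]
  exact Set.mem_iInter.mp hx U

end PPrimaryComponent

namespace IsPPrimaryComponent

variable {p : ℕ} {G : Type*} [AddGroup G] [TopologicalSpace G] [IsTopologicalAddGroup G]
  [CompactSpace G] {h x : G}

theorem pow_nsmul_mem (hp : p.Prime) (hx : IsPPrimaryComponent p h x)
    (U : OpenNormalAddSubgroup G) : ∃ e : ℕ, p ^ e • x ∈ U := by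
  obtain ⟨c, hc⟩ := exists_isPPrimaryIdempotent hp (U.addOrderOf_mk_ne_zero h)
  refine ⟨(addOrderOf (h : G ⧸ U.toAddSubgroup)).factorization p, ?_⟩
  rw [← OpenNormalAddSubgroup.mk_eq_zero_iff, ← natCast_zsmul, QuotientAddGroup.mk_zsmul,
    hx U c hc, smul_smul]
  push_cast
  exact hc.pow_mul_zsmul_eq_zero

variable [TotallyDisconnectedSpace G]

theorem tendsto_pow_nsmul (hp : p.Prime) (hx : IsPPrimaryComponent p h x) :
    Tendsto (fun n : ℕ => p ^ n • x) atTop (𝓝 0) := by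
  refine hasBasis_nhds_zero_openNormalAddSubgroup.tendsto_right_iff.mpr fun U _ => ?_
  obtain ⟨e, he⟩ := hx.pow_nsmul_mem hp U
  filter_upwards [eventually_ge_atTop e] with n hn
  rw [← pow_mul_pow_sub p hn, mul_nsmul]
  exact nsmul_mem he _

theorem map_eq_one [Fact p.Prime] (hx : IsPPrimaryComponent p h x) {φ : G →+ ℤ_[p]}
    (hφ : Continuous φ) (hh : φ h = 1) : φ x = 1 := by
  have hp : p.Prime := Fact.out
  rw [← sub_eq_zero]
  refine PadicInt.eq_zero_of_forall_pow_dvd fun k => ?_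
  obtain ⟨U, -, hU⟩ := hasBasis_nhds_zero_openNormalAddSubgroup.mem_iff.mp
    (((PadicInt.isOpen_setOf_pow_dvd (p := p) k).preimage hφ).mem_nhds (by simp))
  have hN := U.addOrderOf_mk_ne_zero h
  obtain ⟨c, hc⟩ := exists_isPPrimaryIdempotent hp hN
  have hkN : p ^ k ∣ addOrderOf (h : G ⧸ U.toAddSubgroup) := by
    have hmem : addOrderOf (h : G ⧸ U.toAddSubgroup) • h ∈ U := by
      rw [← OpenNormalAddSubgroup.mk_eq_zero_iff, QuotientAddGroup.mk_nsmul]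
      exact addOrderOf_nsmul_eq_zero _
    have := hU hmem
    rw [Set.mem_preimage, Set.mem_ofPred_eq, map_nsmul, hh, nsmul_one] at this
    have hdvd : (p : ℤ) ^ k ∣ (addOrderOf (h : G ⧸ U.toAddSubgroup) : ℤ) :=
      (PadicInt.pow_p_dvd_int_iff k _).mp (by simpa using this)
    exact_mod_cast hdvd
  have hxc : -(c • h) + x ∈ U :=
    QuotientAddGroup.eq.mp ((QuotientAddGroup.mk_zsmul _ _ _).trans (hx U c hc).symm)
  have hφxc : (p : ℤ_[p]) ^ k ∣ φ x - c := by
    simpa [map_add, map_neg, map_zsmul, hh, neg_add_eq_sub] using hU hxc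
  have hc1 : (p : ℤ_[p]) ^ k ∣ c - 1 := by
    exact_mod_cast (PadicInt.pow_p_dvd_int_iff k _).mpr (hc.pow_dvd_sub_one hp hN hkN)
  simpa using dvd_add hφxc hc1

end IsPPrimaryComponent

namespace PadicInt

variable {p : ℕ} [Fact p.Prime] {G : Type*} [AddGroup G] [TopologicalSpace G]
  [IsTopologicalAddGroup G]

theorem snd_mem_of_mem_closure_zmultiples {x : G} {U : OpenAddSubgroup G} {e : ℕ}
    (hxU : p ^ e • x ∈ U) {q : ℤ_[p] × G}
    (hq : q ∈ closure (AddSubgroup.zmultiples ((1 : ℤ_[p]), x) : Set (ℤ_[p] × G)))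
    (hdvd : (p : ℤ_[p]) ^ e ∣ q.1) : q.2 ∈ U := by
  refine closure_minimal (t := {q : ℤ_[p] × G | (p : ℤ_[p]) ^ e ∣ q.1 → q.2 ∈ U}) ?_
    (isClosed_imp ((isOpen_setOf_pow_dvd e).preimage continuous_fst)
      (U.isClosed.preimage continuous_snd)) hq hdvd
  rintro _ ⟨n, rfl⟩ hn
  obtain ⟨t, rfl⟩ : (p : ℤ) ^ e ∣ n := by simpa using hn
  rw [Prod.smul_snd, mul_comm, mul_zsmul]
  have hxU' : ((p : ℤ) ^ e) • x ∈ U := by rwa [← Nat.cast_pow, natCast_zsmul]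
  exact zsmul_mem hxU' t

variable [CompactSpace G] [TotallyDisconnectedSpace G]

theorem exists_continuous_addMonoidHom_map_one_eq {x : G}
    (hx : Tendsto (fun n : ℕ => p ^ n • x) atTop (𝓝 0)) :
    ∃ s : ℤ_[p] →+ G, Continuous s ∧ s 1 = x := by
  set Γ := (AddSubgroup.zmultiples ((1 : ℤ_[p]), x)).topologicalClosure
  have : CompactSpace Γ :=
    isCompact_iff_compactSpace.mp (AddSubgroup.isClosed_topologicalClosure _).isCompact
  let π : Γ →+ ℤ_[p] := (AddMonoidHom.fst ℤ_[p] G).comp Γ.subtype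
  have hπ : Continuous π := continuous_fst.comp continuous_subtype_val
  have hinj : Function.Injective π := by
    refine (injective_iff_map_eq_zero π).mpr fun q hq => Subtype.ext (Prod.ext hq ?_)
    refine eq_zero_of_forall_mem_openNormalAddSubgroup fun U => ?_
    obtain ⟨e, he⟩ := (hx.eventually (U.isOpen.mem_nhds U.zero_mem)).exists
    have hq1 : (q : ℤ_[p] × G).1 = 0 := hq
    exact snd_mem_of_mem_closure_zmultiples (U := U.toOpenAddSubgroup) he q.2
      (hq1 ▸ dvd_zero _)
  have hsurj : Function.Surjective π := by
    have hclosed : IsClosed (Set.range π) := (isCompact_range hπ).isClosed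
    have hdense : Set.range ((↑) : ℤ → ℤ_[p]) ⊆ Set.range π := by
      rintro _ ⟨n, rfl⟩
      exact ⟨⟨n • ((1 : ℤ_[p]), x), AddSubgroup.le_topologicalClosure _ ⟨n, rfl⟩⟩,
        by simp [π]⟩
    rw [← Set.range_eq_univ, ← hclosed.closure_eq, ← Set.univ_subset_iff,
      ← denseRange_intCast.closure_range]
    exact closure_mono hdense
  let e := AddEquiv.ofBijective π ⟨hinj, hsurj⟩
  have he : Continuous e.symm := (hπ.homeoOfEquivCompactToT2 (f := e.toEquiv)).symm.continuous
  refine ⟨(AddMonoidHom.snd ℤ_[p] G).comp (Γ.subtype.comp e.symm.toAddMonoidHom),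
    continuous_snd.comp (continuous_subtype_val.comp he), ?_⟩
  have h1 : e.symm 1 = ⟨((1 : ℤ_[p]), x), AddSubgroup.le_topologicalClosure _
      (AddSubgroup.mem_zmultiples _)⟩ :=
    e.symm_apply_eq.mpr rfl
  simp [h1]

end PadicInt

theorem continuous_section_of_surjection_onto_padicInt_general
    (p : ℕ) [Fact p.Prime]
    (H : Type*) [AddGroup H] [TopologicalSpace H] [IsTopologicalAddGroup H]
    [CompactSpace H] [TotallyDisconnectedSpace H]
    (f : H →+ PadicInt p) (hf : Continuous f) (hsurj : Function.Surjective f) :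
    ∃ s : PadicInt p →+ H, Continuous s ∧ ∀ z, f (s z) = z := by
  obtain ⟨h, hh⟩ := hsurj 1
  have hp : p.Prime := Fact.out
  obtain ⟨x, hx⟩ := exists_isPPrimaryComponent hp h
  obtain ⟨s, hs, hs1⟩ :=
    PadicInt.exists_continuous_addMonoidHom_map_one_eq (hx.tendsto_pow_nsmul hp)
  have hfs : f.comp s = AddMonoidHom.id _ :=
    PadicInt.continuous_addMonoidHom_ext (hf.comp hs) continuous_id
      (by simp [hs1, hx.map_eq_one hf hh])
  exact ⟨s, hs, DFunLike.congr_fun hfs⟩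

/-- Every continuous surjection from a profinite group onto the additive group `ℤ_p` of
`p`-adic integers admits a continuous homomorphic section. -/
theorem continuous_section_of_surjection_onto_padicInt
    (p : ℕ) [Fact p.Prime]
    (H : Type*) [AddGroup H] [TopologicalSpace H] [IsTopologicalAddGroup H]
    [CompactSpace H] [T2Space H] [TotallyDisconnectedSpace H]
    (f : H →+ PadicInt p) (hf : Continuous f) (hsurj : Function.Surjective f) :
    ∃ s : PadicInt p →+ H, Continuous s ∧ ∀ z, f (s z) = z :=
  continuous_section_of_surjection_onto_padicInt_general p H f hf hsurj
end

section
/- Suppose R is a constructible set over F_q whose zeta function Z(R,T) = exp(Σ_{n≥1} #R(F_{q^n}) T^n / n) is rational, and suppose there is a polynomial P with rational coefficients such that #R(F_{q^n}) = P(q^n) for all n ≥ 1. Then P has integer coefficients. -/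
/-!
The hypothesis on `Z` says `Z'/Z = Σ_{n ≥ 0} N(n+1) T^n`, and writing `Z = f/g` this log derivative
is `f'/f - g'/g`, whose residue at any point `r` is the difference of the multiplicities of `r` as
a root of `f` and of `g`: an integer. On the other hand `N(n) = P(q^n) = Σ_j p_j (q^j)^n`, so the
same series is `Σ_j p_j q^j / (1 - q^j T)`, whose residue at `T = q^{-i}` is `-p_i` because the
`q^j` are distinct. Hence every `p_i` is an integer.
-/

open PowerSeries

namespace PowerSeries

variable {R : Type*} [CommRing R]

theorem mk_pow_mul_one_sub_C_mul_X (a : R) : mk (fun n => a ^ n) * (1 - C a * X) = 1 := by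
  have h := congrArg (rescale a) (mk_one_mul_one_sub_eq_one (S := R))
  rw [map_mul, map_sub, map_one, rescale_X, rescale_mk] at h
  simpa using h

theorem mk_add_mul_one_sub_C_mul_X_mul (c a : R) (u : ℕ → R) (D : R⟦X⟧) :
    mk (fun n => c * a ^ (n + 1) + u n) * ((1 - C a * X) * D)
      = C (c * a) * D + (1 - C a * X) * (mk u * D) := by
  have hsplit : mk (fun n => c * a ^ (n + 1) + u n) = C (c * a) * mk (fun n => a ^ n) + mk u := by
    ext n
    simp only [coeff_mk, map_add, coeff_C_mul]
    ring
  rw [hsplit]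
  linear_combination C (c * a) * D * mk_pow_mul_one_sub_C_mul_X a

theorem exists_mk_sum_mul_prod_eq {ι : Type*} (s : Finset ι) (c x : ι → R) :
    ∃ H : Polynomial R, mk (fun n => ∑ j ∈ s, c j * x j ^ (n + 1)) *
      ((∏ j ∈ s, (1 - Polynomial.C (x j) * Polynomial.X) : Polynomial R) : R⟦X⟧) = H := by
  classical
  induction s using Finset.induction_on with
  | empty => exact ⟨0, by ext; simp⟩
  | insert i s hi ih =>
    obtain ⟨H, hH⟩ := ih
    refine ⟨Polynomial.C (c i * x i) * ∏ j ∈ s, (1 - Polynomial.C (x j) * Polynomial.X)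
      + (1 - Polynomial.C (x i) * Polynomial.X) * H, ?_⟩
    simp only [Finset.sum_insert hi, Finset.prod_insert hi]
    push_cast
    rw [mk_add_mul_one_sub_C_mul_X_mul, hH]

theorem mul_mul_eq_wronskian_of_derivative_eq {Z S : R⟦X⟧} {f g : Polynomial R}
    (hZ : d⁄dX R Z = Z * S) (h : Z * g = f) : S * (f * g) = (g.wronskian f : R⟦X⟧) := by
  have h' := congrArg (d⁄dX R) h
  rw [Derivation.leibniz, hZ, derivative_coe, derivative_coe, smul_eq_mul, smul_eq_mul] at h'
  rw [Polynomial.wronskian, Polynomial.coe_sub, Polynomial.coe_mul, Polynomial.coe_mul, ← h]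
  linear_combination (g : R⟦X⟧) * h'

end PowerSeries

namespace Polynomial

theorem X_sub_C_mul_derivative_X_sub_C_pow_mul {R : Type*} [CommRing R] (r : R) (a : ℕ)
    (p : R[X]) : (X - C r) * derivative ((X - C r) ^ a * p)
      = (X - C r) ^ a * (C (a : R) * p + (X - C r) * derivative p) := by
  rw [derivative_mul, derivative_X_sub_C_pow]
  cases a with
  | zero => simp
  | succ a => simp only [Nat.add_sub_cancel, pow_succ]; ring

variable {K : Type*} [Field K]

/-- The residue of `f'/f - g'/g` at `r`, here `H(r)/E(r)`, is an integer. -/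
theorem exists_int_eval_eq_mul_eval_of_mul_eq_mul_wronskian {f g H E : K[X]} {r : K}
    (hf : f ≠ 0) (hg : g ≠ 0) (h : H * (f * g) = (X - C r) * E * wronskian g f) :
    ∃ m : ℤ, H.eval r = m * E.eval r := by
  obtain ⟨f₁, hf_eq, hf₁⟩ := f.exists_eq_pow_rootMultiplicity_mul_and_not_dvd hf r
  obtain ⟨g₁, hg_eq, hg₁⟩ := g.exists_eq_pow_rootMultiplicity_mul_and_not_dvd hg r
  generalize f.rootMultiplicity r = a at hf_eq
  generalize g.rootMultiplicity r = b at hg_eq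
  subst hf_eq hg_eq
  have hX : (X - C r) ^ (a + b + 1) ≠ 0 := pow_ne_zero _ (X_sub_C_ne_zero r)
  have key : H * (f₁ * g₁)
      = E * ((C (a : K) - C (b : K)) * (f₁ * g₁) + (X - C r) * wronskian g₁ f₁) := by
    refine mul_left_cancel₀ hX ?_
    rw [wronskian] at h ⊢
    linear_combination (X - C r) * h
      + (X - C r) * E * ((X - C r) ^ b * g₁) * X_sub_C_mul_derivative_X_sub_C_pow_mul r a f₁
      - (X - C r) * E * ((X - C r) ^ a * f₁) * X_sub_C_mul_derivative_X_sub_C_pow_mul r b g₁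
  have hev := congrArg (eval r) key
  simp only [eval_mul, eval_add, eval_sub, eval_C, eval_X, sub_self, zero_mul, add_zero] at hev
  rw [dvd_iff_isRoot] at hf₁ hg₁
  refine ⟨a - b, mul_right_cancel₀ (mul_ne_zero hf₁ hg₁) ?_⟩
  push_cast
  linear_combination hev

theorem exists_int_eq_of_mk_sum_mul_eq_wronskian {ι : Type*} {f g : K[X]} (hf : f ≠ 0)
    (hg : g ≠ 0) {s : Finset ι} {c x : ι → K} (hx₀ : ∀ j ∈ s, x j ≠ 0) (hx : Set.InjOn x s)
    (hS : mk (fun n => ∑ j ∈ s, c j * x j ^ (n + 1)) * (f * g) = (wronskian g f : K⟦X⟧))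
    {i : ι} (hi : i ∈ s) : ∃ m : ℤ, c i = m := by
  classical
  obtain ⟨H, hH⟩ := exists_mk_sum_mul_prod_eq (s.erase i) c x
  set D := ∏ j ∈ s.erase i, (1 - C (x j) * X)
  have hpoly : (C (c i * x i) * D + (1 - C (x i) * X) * H) * (f * g)
      = (1 - C (x i) * X) * D * wronskian g f := by
    apply coe_injective
    have hsplit := mk_add_mul_one_sub_C_mul_X_mul (c i) (x i)
      (fun n => ∑ j ∈ s.erase i, c j * x j ^ (n + 1)) D
    have hsum (n : ℕ) : c i * x i ^ (n + 1) + ∑ j ∈ s.erase i, c j * x j ^ (n + 1)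
        = ∑ j ∈ s, c j * x j ^ (n + 1) :=
      Finset.add_sum_erase s (fun j => c j * x j ^ (n + 1)) hi
    simp only [hsum, hH] at hsplit
    push_cast at hsplit ⊢
    rw [← hS]
    linear_combination (↑f * ↑g : K⟦X⟧) * hsplit.symm
  have hroot : 1 - C (x i) * X = (X - C (x i)⁻¹) * -C (x i) := by
    rw [mul_neg, sub_mul, ← C_mul, inv_mul_cancel₀ (hx₀ i hi), C_1]
    ring
  obtain ⟨m, hm⟩ := exists_int_eval_eq_mul_eval_of_mul_eq_mul_wronskian (E := -C (x i) * D) hf hg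
    (by rw [hpoly, hroot]; ring)
  have hD : D.eval (x i)⁻¹ ≠ 0 := by
    rw [eval_prod, Finset.prod_ne_zero_iff]
    intro j hj
    simp only [eval_sub, eval_one, eval_mul, eval_C, eval_X]
    rw [sub_ne_zero, ne_comm, ← div_eq_mul_inv, ne_eq, div_eq_one_iff_eq (hx₀ i hi)]
    exact fun hji => (Finset.ne_of_mem_erase hj) (hx (Finset.mem_of_mem_erase hj) hi hji)
  simp only [eval_add, eval_mul, eval_C, eval_neg, eval_sub, eval_X, eval_one,
    mul_inv_cancel₀ (hx₀ i hi), sub_self, zero_mul, add_zero] at hm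
  refine ⟨-m, mul_right_cancel₀ (mul_ne_zero (hx₀ i hi) hD) ?_⟩
  push_cast
  linear_combination hm

end Polynomial

/-- Katz's integrality argument: suppose `R` is a constructible set over `F_q` whose
zeta function `Z(R,T) = exp(Σ_{n≥1} #R(F_{q^n}) T^n / n)` (characterized by `Z(0) = 1`
and `Z' = Z · Σ_{n≥1} #R(F_{q^n}) T^{n-1}`) is a rational function, and that there is a
polynomial `P ∈ ℚ[T]` with `#R(F_{q^n}) = P(q^n)` for all `n ≥ 1`.  Then `P` has
integer coefficients. -/
theorem integral_coeffs_of_rational_zeta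
    (q : ℕ) (hq : ∃ p k : ℕ, p.Prime ∧ 0 < k ∧ q = p ^ k)
    (N : ℕ → ℕ) (P : Polynomial ℚ)
    (hP : ∀ n : ℕ, 1 ≤ n → (N n : ℚ) = P.eval ((q : ℚ) ^ n))
    (Z : PowerSeries ℚ)
    (hZ0 : PowerSeries.constantCoeff Z = 1)
    (hZexp : Z.derivativeFun = Z * PowerSeries.mk fun n => (N (n + 1) : ℚ))
    (hrat : ∃ f g : Polynomial ℚ, g ≠ 0 ∧ Z * (g : PowerSeries ℚ) = (f : PowerSeries ℚ)) :
    ∀ i, ∃ m : ℤ, P.coeff i = (m : ℚ) := by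
  obtain ⟨f, g, hg, hfg⟩ := hrat
  have hf : f ≠ 0 := by
    rintro rfl
    have hZ : Z ≠ 0 := fun h => by simp [h] at hZ0
    simp [hZ, hg] at hfg
  have hq₁ : 1 < (q : ℚ) := by
    obtain ⟨p, k, hp, hk, rfl⟩ := hq
    exact_mod_cast Nat.one_lt_pow hk.ne' hp.one_lt
  have hN : mk (fun n => (N (n + 1) : ℚ))
      = mk fun n => ∑ j ∈ P.support, P.coeff j * ((q : ℚ) ^ j) ^ (n + 1) := by
    ext n
    simp only [coeff_mk, hP (n + 1) n.succ_pos, Polynomial.eval_eq_sum, Polynomial.sum_def,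
      ← pow_mul]
    exact Finset.sum_congr rfl fun j _ => by rw [mul_comm (n + 1)]
  intro i
  by_cases hi : i ∈ P.support
  · refine Polynomial.exists_int_eq_of_mk_sum_mul_eq_wronskian hf hg (fun j _ => by positivity)
      ((pow_right_injective₀ (by positivity) hq₁.ne').injOn) ?_ hi
    rw [← hN]
    exact mul_mul_eq_wronskian_of_derivative_eq hZexp hfg
  · exact ⟨0, by simpa using Polynomial.notMem_support_iff.1 hi⟩
end
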